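/- arXiv:2011.01625 — 4 statements merged into one kernel-verified Lean document; each statement's English description precedes it below -/
import Mathlib

section
/- For every value function v : Finset (Fin n) → ℝ and every feature i ∈ Fin n, the uniform average of the per-permutation contributions equals the classical Shapley subset formula: (1/n!) · ∑_{π ∈ Perm(Fin n)} φ_i(π) = ∑_{S ⊆ Fin n \ {i}} (|S|! · (n − |S| − 1)! / n!) · (v(S ∪ {i}) − v(S)). -/
/-!
Grouping the permutations by the set `S` of features that precede `i`, the contribution is
constant on each group, equal to `v (S ∪ {i}) - v S`; so it suffices to count the permutations
with preceding set `S`. These are exactly the `π` with `compare (π j) #S` equal to `lt` on `S`,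
`eq` at `i` and `gt` elsewhere: the permutations carrying one partition of `Fin n` into three
blocks onto another with the same block sizes. They form a coset of the stabiliser of the
partition, which has `#S! * 1! * (n - #S - 1)!` elements.
-/

open Finset

/-- The set of features that strictly precede `i` in the order given by `π`. -/
def precedingSet {n : ℕ} (π : Equiv.Perm (Fin n)) (i : Fin n) : Finset (Fin n) :=
  Finset.univ.filter (fun j => π j < π i)

/-- The contribution of feature `i` under permutation `π` for value function `v`:
`φ_i(π) = v(S_π(i) ∪ {i}) − v(S_π(i))`. -/
def contrib {n : ℕ} (v : Finset (Fin n) → ℝ) (π : Equiv.Perm (Fin n)) (i : Fin n) : ℝ :=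
  v (insert i (precedingSet π i)) - v (precedingSet π i)

open Equiv

theorem Equiv.Perm.card_comp_eq_of_card_fiber_eq {α ι : Type*} [Fintype α] [DecidableEq α]
    [Fintype ι] [DecidableEq ι] {f g : α → ι}
    (hfg : ∀ o, Fintype.card {a // f a = o} = Fintype.card {a // g a = o}) :
    Fintype.card {π : Perm α // g ∘ π = f} =
      ∏ o, (Fintype.card {a // f a = o}).factorial := by
  set π₀ : Perm α := Equiv.ofFiberEquiv fun o => Fintype.equivOfCardEq (hfg o)
  have hπ₀ : g ∘ π₀ = f := funext (Equiv.ofFiberEquiv_map _)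
  rw [← DomMulAct.stabilizer_card f]
  refine Fintype.card_congr (Equiv.subtypeEquiv (Equiv.mulLeft π₀⁻¹) fun π => ?_)
  rw [← hπ₀]
  simp [Function.comp_def]

theorem Fintype.prod_ordering {M : Type*} [CommMonoid M] (f : Ordering → M) :
    ∏ o, f o = f .lt * f .eq * f .gt := by
  rw [show (univ : Finset Ordering) = {.lt, .eq, .gt} from rfl]
  simp [mul_assoc]

section positionPattern

variable {α : Type*} [DecidableEq α] {i j : α} {S : Finset α}

/-- The value of `compare (π j) (π i)` for every `π` whose preceding set at `i` is `S`. -/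
def positionPattern (i : α) (S : Finset α) (j : α) : Ordering :=
  if j ∈ S then .lt else if j = i then .eq else .gt

lemma positionPattern_eq_lt : positionPattern i S j = .lt ↔ j ∈ S := by
  grind [positionPattern]

lemma positionPattern_eq_eq (hi : i ∉ S) : positionPattern i S j = .eq ↔ j = i := by
  grind [positionPattern]

lemma positionPattern_eq_gt : positionPattern i S j = .gt ↔ j ∉ insert i S := by
  grind [positionPattern]

end positionPattern

variable {n : ℕ} {i : Fin n} {S : Finset (Fin n)}

lemma mem_precedingSet {π : Perm (Fin n)} {j : Fin n} :
    j ∈ precedingSet π i ↔ π j < π i := by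
  simp [precedingSet]

lemma notMem_precedingSet_self (π : Perm (Fin n)) (i : Fin n) : i ∉ precedingSet π i := by
  simp [mem_precedingSet]

lemma card_precedingSet (π : Perm (Fin n)) (i : Fin n) : #(precedingSet π i) = π i := by
  rw [← Fin.card_Iio, ← card_map π.toEmbedding]
  congr 1
  ext j
  simp [mem_precedingSet]

lemma precedingSet_eq_iff {π : Perm (Fin n)} (hi : i ∉ S) {k : Fin n} (hk : (k : ℕ) = #S) :
    precedingSet π i = S ↔ (compare · k) ∘ π = positionPattern i S := by
  constructor
  · rintro rfl
    obtain rfl : k = π i := Fin.ext (hk.trans (card_precedingSet π i))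
    funext j
    simp only [Function.comp_apply, positionPattern, mem_precedingSet,
      LinearOrder.compare_eq_compareOfLessAndEq, compareOfLessAndEq, π.injective.eq_iff]
  · intro h
    have hπi : π i = k := by
      simpa [(positionPattern_eq_eq hi).2 rfl] using congrFun h i
    ext j
    rw [mem_precedingSet, hπi, ← compare_lt_iff_lt, ← positionPattern_eq_lt, ← h,
      Function.comp_apply]

lemma card_compare_fiber_eq (hi : i ∉ S) {k : Fin n} (hk : (k : ℕ) = #S) (o : Ordering) :
    Fintype.card {m : Fin n // compare m k = o} =
      Fintype.card {j // positionPattern i S j = o} := by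
  simp only [Fintype.card_subtype]
  cases o
  · simp [compare_lt_iff_lt, positionPattern_eq_lt, filter_gt_eq_Iio, hk]
  · simp [positionPattern_eq_eq hi, filter_eq']
  · simp only [compare_gt_iff_gt, positionPattern_eq_gt, filter_lt_eq_Ioi,
      filter_notMem_eq_sdiff, Fin.card_Ioi, card_univ_sdiff, card_insert_of_notMem hi, hk]
    rw [Fintype.card_fin]
    omega

lemma card_filter_precedingSet_eq (hi : i ∉ S) :
    #{π : Perm (Fin n) | precedingSet π i = S} = (#S).factorial * (n - #S - 1).factorial := by
  have hS : #S < n := by simpa using card_lt_univ_of_notMem hi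
  rw [← Fintype.card_subtype]
  simp_rw [precedingSet_eq_iff hi (k := ⟨#S, hS⟩) rfl]
  rw [Perm.card_comp_eq_of_card_fiber_eq fun o => (card_compare_fiber_eq hi rfl o).symm,
    Fintype.prod_ordering]
  simp only [Fintype.card_subtype, positionPattern_eq_lt, positionPattern_eq_eq hi,
    positionPattern_eq_gt, filter_mem_eq_inter, univ_inter, filter_eq', mem_univ, if_true,
    card_singleton, filter_notMem_eq_sdiff, card_univ_sdiff, card_insert_of_notMem hi,
    Fintype.card_fin, Nat.sub_sub, Nat.factorial_one, mul_one]

lemma sum_contrib_eq_sum_powerset (v : Finset (Fin n) → ℝ) (i : Fin n) :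
    ∑ π, contrib v π i = ∑ S ∈ (univ \ {i}).powerset,
      (((#S).factorial * (n - #S - 1).factorial : ℕ) : ℝ) * (v (insert i S) - v S) := by
  have hmaps : ∀ π ∈ (univ : Finset (Perm (Fin n))),
      precedingSet π i ∈ (univ \ {i}).powerset := fun π _ => by
    simpa [subset_iff] using notMem_precedingSet_self π i
  rw [← sum_fiberwise_of_maps_to hmaps]
  refine sum_congr rfl fun S hS => ?_
  have hi : i ∉ S := by simpa [subset_iff] using hS
  rw [sum_congr rfl fun π hπ => by rw [contrib, (mem_filter.1 hπ).2], sum_const,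
    card_filter_precedingSet_eq hi, nsmul_eq_mul]

/-- The uniform average of the per-permutation contributions equals the classical
Shapley subset formula. -/
theorem uniform_avg_contrib_eq_shapley_formula {n : ℕ} (v : Finset (Fin n) → ℝ) (i : Fin n) :
    (1 / (Nat.factorial n : ℝ)) * ∑ π : Equiv.Perm (Fin n), contrib v π i =
      ∑ S ∈ (Finset.univ \ {i} : Finset (Fin n)).powerset,
        ((Nat.factorial S.card * Nat.factorial (n - S.card - 1) : ℕ) : ℝ) /
            (Nat.factorial n : ℝ) * (v (insert i S) - v S) := by
  rw [sum_contrib_eq_sum_powerset, mul_sum]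
  exact sum_congr rfl fun S _ => by ring
end

section
/- Symmetry property of (uniform) Shapley values: let v : Finset (Fin n) → ℝ be a value function and i, j ∈ Fin n distinct features such that v(S ∪ {i}) = v(S ∪ {j}) for every S ⊆ Fin n \ {i, j}. Then the uniform Shapley values are equal: (1/n!) ∑_π φ_i(π) = (1/n!) ∑_π φ_j(π). -/
/-!
The hypothesis says exactly that `v` is invariant under relabelling coalitions by the
transposition `τ = (i j)`. Composing an order `π` with `τ` moves the coalition preceding `i`
under `π` to the `τ`-image of it, which now precedes `j`; hence `φ_j(π τ) = φ_i(π)`, and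
summing over the bijection `π ↦ π τ` of permutations gives the claim.
-/

open Finset

theorem Finset.image_swap_eq_self {α : Type*} [DecidableEq α] {S : Finset α} {i j : α}
    (h : i ∈ S ↔ j ∈ S) : S.image (Equiv.swap i j) = S := by
  ext k
  simp only [mem_image]
  grind

theorem Finset.image_swap_insert_of_notMem {α : Type*} [DecidableEq α] {S : Finset α} {i j : α}
    (hi : i ∉ S) (hj : j ∉ S) : (insert i S).image (Equiv.swap i j) = insert j S := by
  rw [image_insert, Equiv.swap_apply_left, image_swap_eq_self (iff_of_false hi hj)]

theorem precedingSet_mul {n : ℕ} (π σ : Equiv.Perm (Fin n)) (k : Fin n) :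
    precedingSet (π * σ) k = (precedingSet π (σ k)).image σ.symm := by
  ext l
  rw [precedingSet, mem_filter, mem_image]
  simp [precedingSet, Equiv.symm_apply_eq]

theorem contrib_mul {n : ℕ} (v : Finset (Fin n) → ℝ) (π σ : Equiv.Perm (Fin n)) (k : Fin n) :
    contrib v (π * σ) k = contrib (fun S => v (S.image σ.symm)) π (σ k) := by
  simp [contrib, precedingSet_mul, image_insert]

theorem apply_image_swap_eq {n : ℕ} {v : Finset (Fin n) → ℝ} {i j : Fin n}
    (hv : ∀ S : Finset (Fin n), S ⊆ Finset.univ \ {i, j} → v (insert i S) = v (insert j S))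
    (S : Finset (Fin n)) : v (S.image (Equiv.swap i j)) = v S := by
  have hv' : ∀ T, i ∉ T → j ∉ T → v (insert i T) = v (insert j T) := fun T hi hj =>
    hv T fun k hk => by grind
  by_cases hi : i ∈ S <;> by_cases hj : j ∈ S
  · rw [image_swap_eq_self (iff_of_true hi hj)]
  · have hjS : j ∉ S.erase i := fun h => hj (mem_of_mem_erase h)
    rw [← insert_erase hi, image_swap_insert_of_notMem (notMem_erase i S) hjS,
      hv' _ (notMem_erase i S) hjS]
  · have hiS : i ∉ S.erase j := fun h => hi (mem_of_mem_erase h)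
    rw [← insert_erase hj, Equiv.swap_comm, image_swap_insert_of_notMem (notMem_erase j S) hiS,
      hv' _ hiS (notMem_erase j S)]
  · rw [image_swap_eq_self (iff_of_false hi hj)]

theorem uniform_shapley_symmetry_general {n : ℕ} (v : Finset (Fin n) → ℝ) (i j : Fin n)
    (hv : ∀ S : Finset (Fin n), S ⊆ Finset.univ \ {i, j} → v (insert i S) = v (insert j S)) :
    (1 / (Nat.factorial n : ℝ)) * ∑ π : Equiv.Perm (Fin n), contrib v π i =
      (1 / (Nat.factorial n : ℝ)) * ∑ π : Equiv.Perm (Fin n), contrib v π j := by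
  have hswap : (fun S : Finset (Fin n) => v (S.image (Equiv.swap i j).symm)) = v :=
    funext (apply_image_swap_eq hv)
  congr 1
  calc ∑ π, contrib v π i = ∑ π, contrib v (π * Equiv.swap i j) j := by
        simp only [contrib_mul, hswap, Equiv.swap_apply_right]
    _ = ∑ π, contrib v π j := Fintype.sum_equiv (Equiv.mulRight (Equiv.swap i j)) _ _ fun _ => rfl

/-- Symmetry property of uniform Shapley values: if `v(S ∪ {i}) = v(S ∪ {j})` for every
`S ⊆ Fin n \ {i, j}`, then the uniform Shapley values of `i` and `j` are equal. -/
theorem uniform_shapley_symmetry {n : ℕ} (v : Finset (Fin n) → ℝ) (i j : Fin n) (hij : i ≠ j)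
    (hv : ∀ S : Finset (Fin n), S ⊆ Finset.univ \ {i, j} → v (insert i S) = v (insert j S)) :
    (1 / (Nat.factorial n : ℝ)) * ∑ π : Equiv.Perm (Fin n), contrib v π i =
      (1 / (Nat.factorial n : ℝ)) * ∑ π : Equiv.Perm (Fin n), contrib v π j :=
  uniform_shapley_symmetry_general v i j hv
end

section
/- Chain model, asymmetric causal Shapley values (pattern R, root cause): let α, β, x₁, x₂ ∈ ℝ and let v : Finset (Fin 2) → ℝ be the value function with v(∅) = 0, v({0}) = β·α·x₁, v({1}) = β·x₂, and v({0,1}) = β·x₂. Taking the asymmetric weight distribution that puts all weight on the single permutation in which feature 0 precedes feature 1 (consistent with the causal ordering X₁ before X₂), the resulting attributions are φ₀ = β·α·x₁ and φ₁ = β·x₂ − β·α·x₁; i.e., all credit for the indirect effect goes to the root cause. -/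
/-!
The weight is the point mass at the identity permutation, under which the features arrive in
index order; so the attribution of feature `i` is `v (Iic i) - v (Iio i)`.
-/

open Finset

theorem precedingSet_one {n : ℕ} (i : Fin n) : precedingSet 1 i = Iio i := by
  ext j
  rw [precedingSet, mem_filter]
  simp

theorem contrib_one {n : ℕ} (v : Finset (Fin n) → ℝ) (i : Fin n) :
    contrib v 1 i = v (Iic i) - v (Iio i) := by
  rw [contrib, precedingSet_one, Iio_insert]

theorem Equiv.Perm.fin_two_apply_zero_lt_apply_one_iff (π : Equiv.Perm (Fin 2)) :
    π 0 < π 1 ↔ π = 1 := by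
  revert π
  decide

theorem chain_asymmetric_causal_shapley_general (α β x₁ x₂ : ℝ) (v : Finset (Fin 2) → ℝ)
    (hv0 : v ∅ = 0) (hv1 : v {0} = β * α * x₁)
    (hv12 : v {0, 1} = β * x₂)
    (w : Equiv.Perm (Fin 2) → ℝ)
    (hw : ∀ π : Equiv.Perm (Fin 2), w π = if π 0 < π 1 then 1 else 0) :
    ∑ π : Equiv.Perm (Fin 2), w π * contrib v π 0 = β * α * x₁ ∧
      ∑ π : Equiv.Perm (Fin 2), w π * contrib v π 1 = β * x₂ - β * α * x₁ := by
  have weighted_eq_identity (i : Fin 2) :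
      ∑ π : Equiv.Perm (Fin 2), w π * contrib v π i = contrib v 1 i := by
    simp only [hw, Equiv.Perm.fin_two_apply_zero_lt_apply_one_iff, ite_mul, one_mul, zero_mul,
      sum_ite_eq', mem_univ, if_true]
  have hIio0 : Iio (0 : Fin 2) = ∅ := by decide
  have hIic0 : Iic (0 : Fin 2) = {0} := by decide
  have hIio1 : Iio (1 : Fin 2) = {0} := by decide
  have hIic1 : Iic (1 : Fin 2) = {0, 1} := by decide
  rw [weighted_eq_identity, weighted_eq_identity, contrib_one, contrib_one,
    hIio0, hIic0, hIio1, hIic1, hv0, hv1, hv12, sub_zero]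
  exact ⟨rfl, rfl⟩

/-- Chain model, asymmetric causal Shapley values (pattern R, root cause): putting all
weight on the single permutation in which feature `0` precedes feature `1` yields
`φ₀ = βαx₁` and `φ₁ = βx₂ − βαx₁`. -/
theorem chain_asymmetric_causal_shapley (α β x₁ x₂ : ℝ) (v : Finset (Fin 2) → ℝ)
    (hv0 : v ∅ = 0) (hv1 : v {0} = β * α * x₁) (hv2 : v {1} = β * x₂)
    (hv12 : v {0, 1} = β * x₂)
    (w : Equiv.Perm (Fin 2) → ℝ)
    (hw : ∀ π : Equiv.Perm (Fin 2), w π = if π 0 < π 1 then 1 else 0) :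
    ∑ π : Equiv.Perm (Fin 2), w π * contrib v π 0 = β * α * x₁ ∧
      ∑ π : Equiv.Perm (Fin 2), w π * contrib v π 1 = β * x₂ - β * α * x₁ :=
  chain_asymmetric_causal_shapley_general α β x₁ x₂ v hv0 hv1 hv12 w hw
end

section
/- Asymmetric Shapley values of the XOR function break symmetry: let f : Bool → Bool → ℝ be given by f a b = 1 if a ≠ b and f a b = 0 if a = b, fix an input (x₁, x₂) ∈ Bool × Bool, and define the value function v : Finset (Fin 2) → ℝ by v(∅) = 1/2, v({0}) = 1/2, v({1}) = 1/2, v({0,1}) = f x₁ x₂ (averaging over uniform independent features outside the coalition). With the asymmetric weight distribution putting all weight on the single permutation in which feature 0 precedes feature 1, the resulting attributions are φ₀ = 0 and φ₁ = f x₁ x₂ − 1/2; in particular (φ₀, φ₁) = (0, 1/2) when f x₁ x₂ = 1 and (φ₀, φ₁) = (0, −1/2) when f x₁ x₂ = 0, even though v satisfies the symmetry hypothesis v(S ∪ {0}) = v(S ∪ {1}) for all S ⊆ Fin 2 \ {0,1}. -/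
/-!
The weights are the point mass at the identity permutation, so each attribution is the marginal
contribution of a feature to the features before it: feature 0 joins `∅` and feature 1 joins
`{0}`. As `v` equals `1/2` on every coalition but the full one, feature 1 receives all of
`v {0, 1} - 1/2`, although the two features are interchangeable for `v`.
-/

open Finset

theorem sum_mul_contrib_of_eq_indicator {n : ℕ} (v : Finset (Fin n) → ℝ)
    (w : Equiv.Perm (Fin n) → ℝ) (σ : Equiv.Perm (Fin n))
    (hw : ∀ π, w π = if π = σ then 1 else 0) (i : Fin n) :
    ∑ π, w π * contrib v π i = contrib v σ i := by
  simp only [hw, ite_mul, one_mul, zero_mul, sum_ite_eq', mem_univ, if_true]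

theorem xor_asymmetric_shapley_breaks_symmetry_general (f : Bool → Bool → ℝ)
    (x₁ x₂ : Bool) (v : Finset (Fin 2) → ℝ)
    (hv0 : v ∅ = 1 / 2) (hv1 : v {0} = 1 / 2) (hv2 : v {1} = 1 / 2)
    (hv12 : v {0, 1} = f x₁ x₂)
    (w : Equiv.Perm (Fin 2) → ℝ)
    (hw : ∀ π : Equiv.Perm (Fin 2), w π = if π 0 < π 1 then 1 else 0) :
    (∑ π : Equiv.Perm (Fin 2), w π * contrib v π 0 = 0 ∧
      ∑ π : Equiv.Perm (Fin 2), w π * contrib v π 1 = f x₁ x₂ - 1 / 2) ∧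
    (f x₁ x₂ = 1 →
      ∑ π : Equiv.Perm (Fin 2), w π * contrib v π 0 = 0 ∧
      ∑ π : Equiv.Perm (Fin 2), w π * contrib v π 1 = 1 / 2) ∧
    (f x₁ x₂ = 0 →
      ∑ π : Equiv.Perm (Fin 2), w π * contrib v π 0 = 0 ∧
      ∑ π : Equiv.Perm (Fin 2), w π * contrib v π 1 = -(1 / 2)) ∧
    (∀ S : Finset (Fin 2), S ⊆ Finset.univ \ {0, 1} →
      v (insert 0 S) = v (insert 1 S)) := by
  have hw₁ : ∀ π, w π = if π = 1 then 1 else 0 := by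
    simpa only [Equiv.Perm.fin_two_apply_zero_lt_apply_one_iff] using hw
  have hφ₀ : ∑ π, w π * contrib v π 0 = 0 := by
    rw [sum_mul_contrib_of_eq_indicator v w 1 hw₁, contrib_one,
      show Iic (0 : Fin 2) = {0} by decide, show Iio (0 : Fin 2) = ∅ by decide, hv0, hv1,
      sub_self]
  have hφ₁ : ∑ π, w π * contrib v π 1 = f x₁ x₂ - 1 / 2 := by
    rw [sum_mul_contrib_of_eq_indicator v w 1 hw₁, contrib_one,
      show Iic (1 : Fin 2) = {0, 1} by decide, show Iio (1 : Fin 2) = {0} by decide, hv12, hv1]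
  refine ⟨⟨hφ₀, hφ₁⟩, fun h => ⟨hφ₀, by rw [hφ₁, h]; norm_num⟩,
    fun h => ⟨hφ₀, by rw [hφ₁, h]; norm_num⟩, fun S hS => ?_⟩
  have hS' : S ⊆ ∅ := by rwa [show (univ : Finset (Fin 2)) \ {0, 1} = ∅ by decide] at hS
  obtain rfl := subset_empty.mp hS'
  rw [insert_empty, insert_empty, hv1, hv2]

/-- Asymmetric Shapley values of the XOR function break symmetry: with all weight on the
permutation in which feature `0` precedes feature `1`, the attributions are `φ₀ = 0` and
`φ₁ = f x₁ x₂ − 1/2` (so `(0, 1/2)` when `f x₁ x₂ = 1` and `(0, −1/2)` when `f x₁ x₂ = 0`),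
even though `v` satisfies the symmetry hypothesis `v(S ∪ {0}) = v(S ∪ {1})` for all
`S ⊆ Fin 2 \ {0, 1}`. -/
theorem xor_asymmetric_shapley_breaks_symmetry (f : Bool → Bool → ℝ)
    (hf : ∀ a b : Bool, f a b = if a = b then 0 else 1)
    (x₁ x₂ : Bool) (v : Finset (Fin 2) → ℝ)
    (hv0 : v ∅ = 1 / 2) (hv1 : v {0} = 1 / 2) (hv2 : v {1} = 1 / 2)
    (hv12 : v {0, 1} = f x₁ x₂)
    (w : Equiv.Perm (Fin 2) → ℝ)
    (hw : ∀ π : Equiv.Perm (Fin 2), w π = if π 0 < π 1 then 1 else 0) :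
    (∑ π : Equiv.Perm (Fin 2), w π * contrib v π 0 = 0 ∧
      ∑ π : Equiv.Perm (Fin 2), w π * contrib v π 1 = f x₁ x₂ - 1 / 2) ∧
    (f x₁ x₂ = 1 →
      ∑ π : Equiv.Perm (Fin 2), w π * contrib v π 0 = 0 ∧
      ∑ π : Equiv.Perm (Fin 2), w π * contrib v π 1 = 1 / 2) ∧
    (f x₁ x₂ = 0 →
      ∑ π : Equiv.Perm (Fin 2), w π * contrib v π 0 = 0 ∧
      ∑ π : Equiv.Perm (Fin 2), w π * contrib v π 1 = -(1 / 2)) ∧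
    (∀ S : Finset (Fin 2), S ⊆ Finset.univ \ {0, 1} →
      v (insert 0 S) = v (insert 1 S)) :=
  xor_asymmetric_shapley_breaks_symmetry_general f x₁ x₂ v hv0 hv1 hv2 hv12 w hw
end
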